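/- Liouville's formula for quaternionic systems: let A : ℝ → ℍ^{n×n} be continuous and let M be a fundamental matrix of ẋ = A(t)x. Then for all t, t₀ ∈ ℝ, det(χ_{M(t)}) = exp(2·∫_{t₀}^{t} Re(tr A(τ)) dτ) · det(χ_{M(t₀)}), where the determinants are taken in ℂ and the exponential factor is real. -/

import Mathlib

open Matrix Polynomial
open scoped Quaternion

noncomputable section

/-- The two complex components of a quaternion: `q = c1 q + (c2 q) * j`,
identifying `ℂ` with the real span of `1` and `i` in `ℍ`. -/
def Quaternion.c1 (q : ℍ[ℝ]) : ℂ := ⟨q.re, q.imI⟩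

def Quaternion.c2 (q : ℍ[ℝ]) : ℂ := ⟨q.imJ, q.imK⟩

/-- The embedding of `ℂ` into `ℍ` as the real span of `1` and `i`. -/
def Complex.toQuat (z : ℂ) : ℍ[ℝ] := ⟨z.re, z.im, 0, 0⟩

/-- The complex adjoint matrix `χ_A` of a quaternion matrix `A = A₁ + A₂·j`:
the block matrix `[[A₁, A₂], [-conj A₂, conj A₁]]`. -/
def chiMat {n : ℕ} (A : Matrix (Fin n) (Fin n) ℍ[ℝ]) :
    Matrix (Fin n ⊕ Fin n) (Fin n ⊕ Fin n) ℂ :=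
  Matrix.fromBlocks (A.map Quaternion.c1) (A.map Quaternion.c2)
    ((-(A.map Quaternion.c2)).map (starRingEnd ℂ)) ((A.map Quaternion.c1).map (starRingEnd ℂ))

/-- `ρ` is a standard eigenvalue of the quaternion matrix `A`: an eigenvalue of the
complex adjoint matrix `χ_A` with nonnegative imaginary part. -/
def IsStdEigenvalue {n : ℕ} (A : Matrix (Fin n) (Fin n) ℍ[ℝ]) (ρ : ℂ) : Prop :=
  (chiMat A).charpoly.IsRoot ρ ∧ 0 ≤ ρ.im

/-- `s` is the multiset of standard eigenvalues of `A` counted with multiplicity: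
it has `n` elements, all with nonnegative imaginary part, and the characteristic
polynomial of `χ_A` is `∏_{z ∈ s} (X - z)·(X - conj z)`. -/
def IsStdEigs {n : ℕ} (A : Matrix (Fin n) (Fin n) ℍ[ℝ]) (s : Multiset ℂ) : Prop :=
  Multiset.card s = n ∧ (∀ z ∈ s, 0 ≤ z.im) ∧
    (chiMat A).charpoly =
      (s.map (fun z => (X - C z) * (X - C (starRingEnd ℂ z)))).prod

/-- `x : ℝ → ℍ^n` is a solution of the linear quaternionic system `ẋ = A(t)x`. -/
def IsSol {n : ℕ} (A : ℝ → Matrix (Fin n) (Fin n) ℍ[ℝ]) (x : ℝ → Fin n → ℍ[ℝ]) : Prop :=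
  ∀ t : ℝ, HasDerivAt x ((A t).mulVec (x t)) t

/-- The norm `‖x‖ = Σ_k |x_k|` on `ℍ^n`. -/
def vecNorm {n : ℕ} (x : Fin n → ℍ[ℝ]) : ℝ := ∑ k, ‖x k‖

/-- The norm `‖A‖ = Σ_{i,j} |a_{ij}|` on `ℍ^{n×n}`. -/
def matNorm {n : ℕ} (A : Matrix (Fin n) (Fin n) ℍ[ℝ]) : ℝ := ∑ i, ∑ j, ‖A i j‖

/-- Stability (in the sense of Lyapunov) of the system `ẋ = A(t)x` at `t₀`. -/
def StableAt {n : ℕ} (A : ℝ → Matrix (Fin n) (Fin n) ℍ[ℝ]) (t₀ : ℝ) : Prop :=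
  ∀ ε > (0:ℝ), ∃ δ > (0:ℝ), ∀ x : ℝ → Fin n → ℍ[ℝ], IsSol A x →
    vecNorm (x t₀) < δ → ∀ t ≥ t₀, vecNorm (x t) < ε

/-- Asymptotic stability of the system `ẋ = A(t)x` at `t₀`. -/
def AsympStableAt {n : ℕ} (A : ℝ → Matrix (Fin n) (Fin n) ℍ[ℝ]) (t₀ : ℝ) : Prop :=
  StableAt A t₀ ∧ ∃ δ > (0:ℝ), ∀ x : ℝ → Fin n → ℍ[ℝ], IsSol A x →
    vecNorm (x t₀) < δ →
      Filter.Tendsto (fun t => vecNorm (x t)) Filter.atTop (nhds 0)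

/-- `M` is a fundamental matrix of `ẋ = A(t)x`: entrywise `M'(t) = A(t)·M(t)`
and `M(t)` is invertible for every `t`. -/
def IsFundamental {n : ℕ} (A M : ℝ → Matrix (Fin n) (Fin n) ℍ[ℝ]) : Prop :=
  (∀ (t : ℝ) (i j : Fin n), HasDerivAt (fun s => M s i j) ((A t * M t) i j) t) ∧
    ∀ t : ℝ, IsUnit (M t)

/-! Since `χ` is multiplicative, `N(t) = χ_{M(t)}` solves the complex system `N' = χ_{A(t)} N`.
Jacobi's formula then gives `(det N)' = tr χ_{A(t)} · det N = 2 Re tr A(t) · det N`, a scalar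
linear equation: `exp(-∫ 2 Re tr A) · det N` has derivative zero, hence is constant. -/

namespace Quaternion

lemma c1_mul (q r : ℍ[ℝ]) : (q * r).c1 = q.c1 * r.c1 - q.c2 * starRingEnd ℂ r.c2 := by
  apply Complex.ext <;>
    simp only [c1, c2, re_mul, imI_mul, Complex.sub_re, Complex.sub_im, Complex.mul_re,
      Complex.mul_im, Complex.conj_re, Complex.conj_im] <;>
    ring

lemma c2_mul (q r : ℍ[ℝ]) : (q * r).c2 = q.c1 * r.c2 + q.c2 * starRingEnd ℂ r.c1 := by
  apply Complex.ext <;>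
    simp only [c1, c2, imJ_mul, imK_mul, Complex.add_re, Complex.add_im, Complex.mul_re,
      Complex.mul_im, Complex.conj_re, Complex.conj_im] <;>
    ring

def c1CLM : ℍ[ℝ] →L[ℝ] ℂ where
  toFun := c1
  map_add' _ _ := by apply Complex.ext <;> simp [c1]
  map_smul' _ _ := by apply Complex.ext <;> simp [c1]
  cont := Complex.equivRealProdCLM.symm.continuous.comp (continuous_re.prodMk continuous_imI)

def c2CLM : ℍ[ℝ] →L[ℝ] ℂ where
  toFun := c2
  map_add' _ _ := by apply Complex.ext <;> simp [c2]
  map_smul' _ _ := by apply Complex.ext <;> simp [c2]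
  cont := Complex.equivRealProdCLM.symm.continuous.comp (continuous_imJ.prodMk continuous_imK)

lemma c1_sum {α : Type*} (s : Finset α) (f : α → ℍ[ℝ]) :
    (∑ a ∈ s, f a).c1 = ∑ a ∈ s, (f a).c1 :=
  map_sum c1CLM f s

lemma c2_sum {α : Type*} (s : Finset α) (f : α → ℍ[ℝ]) :
    (∑ a ∈ s, f a).c2 = ∑ a ∈ s, (f a).c2 :=
  map_sum c2CLM f s

end Quaternion

lemma chiMat_mul {n : ℕ} (X Y : Matrix (Fin n) (Fin n) ℍ[ℝ]) :
    chiMat (X * Y) = chiMat X * chiMat Y := by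
  rw [chiMat, chiMat, chiMat, fromBlocks_multiply]
  ext (i | i) (j | j) <;>
    simp only [fromBlocks_apply₁₁, fromBlocks_apply₁₂, fromBlocks_apply₂₁, fromBlocks_apply₂₂,
      map_apply, Matrix.add_apply, mul_apply, Matrix.neg_apply, map_neg, map_sum,
      ← Finset.sum_neg_distrib, Quaternion.c1_sum, Quaternion.c2_sum, ← Finset.sum_add_distrib,
      Quaternion.c1_mul, Quaternion.c2_mul, map_add, map_sub, _root_.map_mul,
      Complex.conj_conj] <;>
    exact Finset.sum_congr rfl fun _ _ => by ring

lemma trace_chiMat {n : ℕ} (X : Matrix (Fin n) (Fin n) ℍ[ℝ]) :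
    trace (chiMat X) = ((2 * (trace X).re : ℝ) : ℂ) := by
  have re_trace : (trace X).re = ∑ i, (X i i).re :=
    map_sum (QuaternionAlgebra.reₗ (c₁ := -1) (c₂ := 0) (c₃ := -1)) (fun i => X i i) _
  rw [re_trace, Finset.mul_sum]
  apply Complex.ext <;>
    simp [chiMat, trace, Fintype.sum_sum_type, Complex.re_sum, Complex.im_sum, Quaternion.c1,
      ← Finset.sum_add_distrib, two_mul]

lemma hasDerivAt_chiMat {n : ℕ} {M : ℝ → Matrix (Fin n) (Fin n) ℍ[ℝ]}
    {M' : Matrix (Fin n) (Fin n) ℍ[ℝ]} {t : ℝ}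
    (h : ∀ i j, HasDerivAt (fun s => M s i j) (M' i j) t) (a b : Fin n ⊕ Fin n) :
    HasDerivAt (fun s => chiMat (M s) a b) (chiMat M' a b) t := by
  rcases a with i | i <;> rcases b with j | j <;>
    simp only [chiMat, fromBlocks_apply₁₁, fromBlocks_apply₁₂, fromBlocks_apply₂₁,
      fromBlocks_apply₂₂, map_apply]
  · exact Quaternion.c1CLM.hasFDerivAt.comp_hasDerivAt t (h i j)
  · exact Quaternion.c2CLM.hasFDerivAt.comp_hasDerivAt t (h i j)
  · exact (Quaternion.c2CLM.hasFDerivAt.comp_hasDerivAt t (h i j)).neg.star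
  · exact (Quaternion.c1CLM.hasFDerivAt.comp_hasDerivAt t (h i j)).star

namespace Matrix

variable {ι 𝕜 : Type*} [Fintype ι] [DecidableEq ι]

variable (ι 𝕜) in
def detRowContinuousMultilinear [NormedField 𝕜] :
    ContinuousMultilinearMap 𝕜 (fun _ : ι => ι → 𝕜) 𝕜 where
  toMultilinearMap := (detRowAlternating : (ι → 𝕜) [⋀^ι]→ₗ[𝕜] 𝕜).toMultilinearMap
  cont := continuous_id.matrix_det

lemma hasDerivAt_det [NontriviallyNormedField 𝕜] [NormedAlgebra ℝ 𝕜] {N : ℝ → Matrix ι ι 𝕜}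
    {N' : Matrix ι ι 𝕜} {t : ℝ} (h : ∀ i j, HasDerivAt (fun s => N s i j) (N' i j) t) :
    HasDerivAt (fun s => (N s).det) (∑ i, ((N t).updateRow i (N' i)).det) t := by
  have h_rows : HasDerivAt (fun s i => N s i) (fun i => N' i) t :=
    hasDerivAt_pi.2 fun i => hasDerivAt_pi.2 fun j => h i j
  refine ((((detRowContinuousMultilinear ι 𝕜).hasFDerivAt _).restrictScalars ℝ).comp_hasDerivAt t
    h_rows).congr_deriv ?_
  rw [ContinuousLinearMap.coe_restrictScalars', ContinuousMultilinearMap.linearDeriv_apply]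
  rfl

lemma sum_det_updateRow_mul [CommRing 𝕜] (B N : Matrix ι ι 𝕜) :
    ∑ i, (N.updateRow i ((B * N) i)).det = trace B * N.det := by
  have row_eq (i : ι) : (B * N) i = ∑ k, B i k • N k := by
    ext j; simp [mul_apply]
  simp only [row_eq, det_updateRow_sum, smul_eq_mul, trace, diag, Finset.sum_mul]

lemma hasDerivAt_det_of_hasDerivAt_mul [NontriviallyNormedField 𝕜] [NormedAlgebra ℝ 𝕜]
    {N : ℝ → Matrix ι ι 𝕜} {B : Matrix ι ι 𝕜} {t : ℝ}
    (h : ∀ i j, HasDerivAt (fun s => N s i j) ((B * N t) i j) t) :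
    HasDerivAt (fun s => (N s).det) (trace B * (N t).det) t := by
  simpa only [sum_det_updateRow_mul] using hasDerivAt_det h

end Matrix

lemma eq_exp_integral_smul_of_hasDerivAt {E : Type*} [NormedAddCommGroup E] [NormedSpace ℝ E]
    {c : ℝ → ℝ} (hc : Continuous c) {g : ℝ → E} (hg : ∀ s, HasDerivAt g (c s • g s) s)
    (t t₀ : ℝ) : g t = Real.exp (∫ τ in t₀..t, c τ) • g t₀ := by
  set u : ℝ → ℝ := fun s => ∫ τ in t₀..s, c τ
  have hu (s : ℝ) : HasDerivAt u (c s) s := (hc.integral_hasStrictDerivAt t₀ s).hasDerivAt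
  have h_const (s : ℝ) : HasDerivAt (fun s => Real.exp (-u s) • g s) 0 s :=
    ((hu s).neg.exp.smul (hg s)).congr_deriv (by module)
  have h_eq : Real.exp (-u t) • g t = Real.exp (-u t₀) • g t₀ :=
    is_const_of_deriv_eq_zero (fun s => (h_const s).differentiableAt) (fun s => (h_const s).deriv)
      t t₀
  rw [show u t₀ = 0 from intervalIntegral.integral_same, neg_zero, Real.exp_zero, one_smul] at h_eq
  rw [← h_eq, smul_smul, ← Real.exp_add, add_neg_cancel, Real.exp_zero, one_smul]

/-- Liouville's formula for quaternionic systems: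
`det χ_{M(t)} = exp(2∫_{t₀}^{t} Re(tr A(τ)) dτ) · det χ_{M(t₀)}`. -/
theorem stmt13 {n : ℕ} (A M : ℝ → Matrix (Fin n) (Fin n) ℍ[ℝ]) (hA : Continuous A)
    (hM : IsFundamental A M) (t t₀ : ℝ) :
    (chiMat (M t)).det =
      (Real.exp (2 * ∫ τ in t₀..t, (Matrix.trace (A τ)).re) : ℂ) * (chiMat (M t₀)).det := by
  have h_re_trace : Continuous fun τ => 2 * (trace (A τ)).re :=
    continuous_const.mul (Quaternion.continuous_re.comp hA.matrix_trace)
  have h_det (s : ℝ) : HasDerivAt (fun s => (chiMat (M s)).det)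
      ((2 * (trace (A s)).re) • (chiMat (M s)).det) s := by
    rw [Complex.real_smul, ← trace_chiMat]
    exact Matrix.hasDerivAt_det_of_hasDerivAt_mul fun a b =>
      chiMat_mul (A s) (M s) ▸ hasDerivAt_chiMat (hM.1 s) a b
  rw [eq_exp_integral_smul_of_hasDerivAt h_re_trace h_det t t₀,
    intervalIntegral.integral_const_mul, Complex.real_smul]
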